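/- For every natural number n ≥ 2, the identity (X + (1-q) s D_q) L_n(x,-s) = L_{n+1}(x,-s) + s · L_{n-1}(x,-s) holds, where the left-hand side is the operator X + (1-q) s D_q applied to the polynomial L_n(x,-s). -/

import Mathlib

noncomputable section

/-- The field `ℚ(q,s)` of rational functions in two indeterminates. -/
abbrev F : Type := FractionRing (MvPolynomial (Fin 2) ℚ)

/-- The indeterminate `q`. -/
def q : F := algebraMap (MvPolynomial (Fin 2) ℚ) F (MvPolynomial.X 0)

/-- The indeterminate `s`. -/
def s : F := algebraMap (MvPolynomial (Fin 2) ℚ) F (MvPolynomial.X 1)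

/-- The q-integer `[n]_q = 1 + q + ⋯ + q^{n-1}`. -/
def qInt (n : ℕ) : F := ∑ i ∈ Finset.range n, q ^ i

/-- The q-factorial `[n]_q! = ∏_{k=1}^n [k]_q`. -/
def qFact (n : ℕ) : F := ∏ k ∈ Finset.range n, qInt (k + 1)

/-- The q-binomial coefficient `[n choose k]_q = [n]_q!/([k]_q! [n-k]_q!)`. -/
def qBinom (n k : ℕ) : F := qFact n / (qFact k * qFact (n - k))

/-- The operator `X` of multiplication by `x` on `F[x]`. -/
def Xop : Module.End F (Polynomial F) := LinearMap.mulLeft F Polynomial.X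

/-- Division by `x` (discarding the constant term), as a linear map. -/
def divXL : Polynomial F →ₗ[F] Polynomial F where
  toFun := Polynomial.divX
  map_add' p r := Polynomial.divX_add
  map_smul' a p := by
    ext n
    simp [Polynomial.coeff_divX, Polynomial.coeff_smul]

/-- The q-derivative `D_q f(x) = (f(qx) - f(x))/((q-1)x)`; it is the F-linear
operator on `F[x]` determined by `D_q x^n = [n]_q x^{n-1}`. -/
def Dq : Module.End F (Polynomial F) :=
  (q - 1)⁻¹ •
    (divXL ∘ₗ
      ((Polynomial.aeval (Polynomial.C q * Polynomial.X)).toLinearMap - LinearMap.id))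

/-- The polynomials `h_n(x,t) = Σ_j q^{j²} t^j [n]_q!/((1+q)⋯(1+q^j)·[j]_q!·[n-2j]_q!)
x^{n-2j}` (the parameter `t` will be specialized to `s` or `q²s`). -/
def h (t : F) (n : ℕ) : Polynomial F :=
  ∑ j ∈ Finset.range (n / 2 + 1),
    Polynomial.C (q ^ (j ^ 2) * t ^ j * qFact n /
        ((∏ i ∈ Finset.range j, (1 + q ^ (i + 1))) * qFact j * qFact (n - 2 * j))) *
      Polynomial.X ^ (n - 2 * j)


/-- The q-Lucas polynomials: `L 0 = 1` and, for `n ≥ 1`,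
`L_n(x,t) = Σ_{k=0}^{⌊n/2⌋} q^{C(k,2)} ([n]_q/[n-k]_q) [n-k choose k]_q t^k x^{n-2k}`. -/
def L (t : F) : ℕ → Polynomial F
  | 0 => 1
  | n + 1 =>
    ∑ k ∈ Finset.range ((n + 1) / 2 + 1),
      Polynomial.C (q ^ k.choose 2 * (qInt (n + 1) / qInt (n + 1 - k)) *
          qBinom (n + 1 - k) k * t ^ k) *
        Polynomial.X ^ (n + 1 - 2 * k)

/-! Both sides equal `x^(n+1)` plus a combination of the powers `x^(n-1-2k)`. Since
`X` and `D_q` act on monomials by `x^m ↦ x^(m+1)` and `x^m ↦ [m]_q x^(m-1)`, comparing the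
coefficients of `x^(n-1-2k)` and dividing by `(-s)^(k+1)` leaves the recurrence
`c(n+1,k+1) = c(n,k+1) + c(n-1,k) - (1-q)[n-2k]_q c(n,k)` for the coefficients `c(n,k)` of `L_n`.
Written with q-factorials it becomes a rational identity in `q`, `q^k` and `q^(n-2k)`. -/

open Polynomial Finset

lemma q_pow_sub_one_ne_zero {m : ℕ} (hm : m ≠ 0) : q ^ m - 1 ≠ 0 := by
  rw [sub_ne_zero, q, ← map_pow, ← map_one (algebraMap (MvPolynomial (Fin 2) ℚ) F),
    (IsFractionRing.injective (MvPolynomial (Fin 2) ℚ) F).ne_iff]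
  intro h
  have h2 := congrArg (MvPolynomial.eval fun _ => (2 : ℚ)) h
  simp only [map_pow, MvPolynomial.eval_X, map_one] at h2
  exact (one_lt_pow₀ (by norm_num : (1 : ℚ) < 2) hm).ne' h2

lemma q_sub_one_ne_zero : q - 1 ≠ 0 := by
  simpa using q_pow_sub_one_ne_zero one_ne_zero

lemma qInt_eq_div (m : ℕ) : qInt m = (q ^ m - 1) / (q - 1) :=
  eq_div_of_mul_eq q_sub_one_ne_zero (geom_sum_mul q m)

lemma qInt_ne_zero {m : ℕ} (hm : m ≠ 0) : qInt m ≠ 0 := by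
  rw [qInt_eq_div]
  exact div_ne_zero (q_pow_sub_one_ne_zero hm) q_sub_one_ne_zero

lemma qFact_ne_zero (m : ℕ) : qFact m ≠ 0 :=
  prod_ne_zero_iff.mpr fun k _ => qInt_ne_zero k.succ_ne_zero

lemma qInt_zero : qInt 0 = 0 := sum_range_zero _

lemma qInt_one : qInt 1 = 1 := by simp [qInt]

lemma qFact_zero : qFact 0 = 1 := prod_range_zero _

lemma qFact_one : qFact 1 = 1 := by simp [qFact, qInt_one]

lemma qFact_succ (m : ℕ) : qFact (m + 1) = qFact m * qInt (m + 1) :=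
  prod_range_succ _ m

lemma smul_C_mul_X_pow (a c : F) (e : ℕ) : a • (C c * X ^ e) = C (a * c) * X ^ e := by
  rw [← smul_mul_assoc, smul_C, smul_eq_mul]

lemma Xop_apply (p : F[X]) : Xop p = X * p := rfl

lemma divXL_apply (p : F[X]) : divXL p = divX p := rfl

lemma Dq_X_pow (e : ℕ) : Dq (X ^ e) = C (qInt e) * X ^ (e - 1) := by
  have h : aeval (C q * X) (X ^ e : F[X]) - X ^ e = C (q ^ e - 1) * X ^ e := by
    rw [map_pow, aeval_X, mul_pow, ← C_pow, C_sub, C_1]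
    ring
  simp only [Dq, LinearMap.smul_apply, LinearMap.comp_apply, LinearMap.sub_apply,
    AlgHom.toLinearMap_apply, LinearMap.id_apply, divXL_apply, h]
  cases e with
  | zero => simp [qInt]
  | succ e =>
    rw [divX_C_mul_X_pow, if_neg e.succ_ne_zero, smul_C_mul_X_pow, qInt_eq_div, div_eq_inv_mul]

lemma Dq_C_mul_X_pow (c : F) (e : ℕ) : Dq (C c * X ^ e) = C (c * qInt e) * X ^ (e - 1) := by
  rw [C_mul', map_smul, Dq_X_pow, smul_C_mul_X_pow]

/-- The coefficient of `t ^ k * x ^ (n - 2 * k)` in `L t n` for `n ≠ 0`, set to `0` when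
`n < 2 * k`, where the formula (through truncated subtraction) would not vanish. -/
def lucasCoeff (n k : ℕ) : F :=
  if 2 * k ≤ n then q ^ k.choose 2 * (qInt n / qInt (n - k)) * qBinom (n - k) k else 0

lemma lucasCoeff_of_lt {n k : ℕ} (h : n < 2 * k) : lucasCoeff n k = 0 :=
  if_neg h.not_ge

lemma lucasCoeff_zero_right {n : ℕ} (hn : n ≠ 0) : lucasCoeff n 0 = 1 := by
  simp [lucasCoeff, qBinom, qFact_ne_zero, qInt_ne_zero hn, qFact_zero]

lemma lucasCoeff_eq_div {n k : ℕ} (h : 2 * k ≤ n) (hk : k < n) :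
    lucasCoeff n k =
      q ^ k.choose 2 * qInt n * qFact (n - k - 1) / (qFact k * qFact (n - 2 * k)) := by
  obtain ⟨m, hm⟩ : ∃ m, n - k = m + 1 := ⟨n - k - 1, by omega⟩
  rw [lucasCoeff, if_pos h, qBinom, hm, qFact_succ, show m + 1 - k = n - 2 * k by omega,
    Nat.add_sub_cancel]
  have := qInt_ne_zero m.succ_ne_zero
  field_simp

lemma L_eq_sum_range (t : F) {n N : ℕ} (hn : n ≠ 0) (hN : n < 2 * N) :
    L t n = ∑ k ∈ range N, C (lucasCoeff n k * t ^ k) * X ^ (n - 2 * k) := by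
  obtain ⟨m, rfl⟩ := Nat.exists_eq_succ_of_ne_zero hn
  rw [L]
  refine sum_subset_zero_on_sdiff (range_subset_range.mpr (by omega)) ?_ ?_
  · intro k hk
    simp only [mem_sdiff, mem_range] at hk
    rw [lucasCoeff_of_lt (by omega), zero_mul, C_0, zero_mul]
  · intro k hk
    rw [lucasCoeff, if_pos (by have := mem_range.mp hk; omega)]

lemma X_mul_C_lucasCoeff_mul_X_pow (n k : ℕ) (c : F) :
    X * (C (lucasCoeff n k * c) * X ^ (n - 2 * k)) =
      C (lucasCoeff n k * c) * X ^ (n + 1 - 2 * k) := by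
  by_cases h : 2 * k ≤ n
  · rw [show n + 1 - 2 * k = n - 2 * k + 1 by omega, pow_succ]
    ring
  · simp [lucasCoeff_of_lt (not_le.mp h)]

lemma lucasCoeff_recurrence_interior (k u : ℕ) :
    lucasCoeff (2 * k + 3 + u) (k + 1) =
      lucasCoeff (2 * k + 2 + u) (k + 1) + lucasCoeff (2 * k + 1 + u) k
        - (1 - q) * qInt (u + 2) * lucasCoeff (2 * k + 2 + u) k := by
  rw [lucasCoeff_eq_div (by omega) (by omega), lucasCoeff_eq_div (by omega) (by omega),
    lucasCoeff_eq_div (by omega) (by omega), lucasCoeff_eq_div (by omega) (by omega),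
    show 2 * k + 3 + u - (k + 1) - 1 = k + u + 1 by omega,
    show 2 * k + 2 + u - (k + 1) - 1 = k + u by omega,
    show 2 * k + 1 + u - k - 1 = k + u by omega,
    show 2 * k + 2 + u - k - 1 = k + u + 1 by omega,
    show 2 * k + 3 + u - 2 * (k + 1) = u + 1 by omega,
    show 2 * k + 2 + u - 2 * (k + 1) = u by omega,
    show 2 * k + 1 + u - 2 * k = u + 1 by omega,
    show 2 * k + 2 + u - 2 * k = u + 1 + 1 by omega,
    qFact_succ (k + u), qFact_succ k, qFact_succ (u + 1), qFact_succ u,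
    Nat.choose_succ_succ', Nat.choose_one_right]
  simp only [qInt_eq_div]
  have := q_sub_one_ne_zero
  have := qFact_ne_zero k
  have := qFact_ne_zero u
  have := qFact_ne_zero (k + u)
  have := q_pow_sub_one_ne_zero (m := k + 1) (by omega)
  have := q_pow_sub_one_ne_zero (m := u + 1) (by omega)
  have := q_pow_sub_one_ne_zero (m := u + 1 + 1) (by omega)
  field_simp
  ring

lemma lucasCoeff_recurrence_top {k : ℕ} (hk : k ≠ 0) :
    lucasCoeff (2 * k + 2) (k + 1) =
      lucasCoeff (2 * k) k - (1 - q) * qInt 1 * lucasCoeff (2 * k + 1) k := by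
  obtain ⟨j, rfl⟩ : ∃ j, k = j + 1 := ⟨k - 1, by omega⟩
  rw [lucasCoeff_eq_div (by omega) (by omega), lucasCoeff_eq_div (by omega) (by omega),
    lucasCoeff_eq_div (by omega) (by omega),
    show 2 * (j + 1) + 2 - (j + 1 + 1) - 1 = j + 1 by omega,
    show 2 * (j + 1) - (j + 1) - 1 = j by omega,
    show 2 * (j + 1) + 1 - (j + 1) - 1 = j + 1 by omega,
    show 2 * (j + 1) + 2 - 2 * (j + 1 + 1) = 0 by omega,
    show 2 * (j + 1) - 2 * (j + 1) = 0 by omega,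
    show 2 * (j + 1) + 1 - 2 * (j + 1) = 1 by omega,
    qFact_succ (j + 1), qFact_succ j, qFact_zero, qFact_one, qInt_one,
    Nat.choose_succ_succ' (j + 1), Nat.choose_one_right]
  simp only [qInt_eq_div]
  have := q_sub_one_ne_zero
  have := qFact_ne_zero j
  have := q_pow_sub_one_ne_zero (m := j + 1) (by omega)
  have := q_pow_sub_one_ne_zero (m := j + 1 + 1) (by omega)
  field_simp
  ring

lemma lucasCoeff_recurrence {n : ℕ} (hn : 2 ≤ n) (k : ℕ) :
    lucasCoeff (n + 1) (k + 1) =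
      lucasCoeff n (k + 1) + lucasCoeff (n - 1) k
        - (1 - q) * qInt (n - 2 * k) * lucasCoeff n k := by
  rcases le_or_gt (2 * k + 2) n with h | h
  · obtain ⟨u, rfl⟩ := Nat.exists_eq_add_of_le h
    rw [show 2 * k + 2 + u + 1 = 2 * k + 3 + u by omega,
      show 2 * k + 2 + u - 1 = 2 * k + 1 + u by omega, show 2 * k + 2 + u - 2 * k = u + 2 by omega]
    exact lucasCoeff_recurrence_interior k u
  rcases (by omega : n = 2 * k + 1 ∨ n ≤ 2 * k) with rfl | h
  · rw [show 2 * k + 1 + 1 = 2 * k + 2 by ring, show 2 * k + 1 - 1 = 2 * k by omega,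
      show 2 * k + 1 - 2 * k = 1 by omega, lucasCoeff_of_lt (by omega : 2 * k + 1 < 2 * (k + 1)),
      zero_add]
    exact lucasCoeff_recurrence_top (by omega)
  · simp [lucasCoeff_of_lt, Nat.sub_eq_zero_of_le h, qInt_zero, show n < 2 * (k + 1) by omega,
      show n - 1 < 2 * k by omega, show n + 1 < 2 * (k + 1) by omega]

lemma L_eq_X_pow_add_sum_range (t : F) {n N : ℕ} (hn : n ≠ 0) (hN : n < 2 * N + 2) :
    L t n = X ^ n +
      ∑ k ∈ range N, C (lucasCoeff n (k + 1) * t ^ (k + 1)) * X ^ (n - 2 * (k + 1)) := by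
  rw [L_eq_sum_range t hn (N := N + 1) (by omega), sum_range_succ', lucasCoeff_zero_right hn,
    add_comm]
  simp

lemma Xop_add_smul_Dq_apply_L (t : F) {n N : ℕ} (hn : n ≠ 0) (hN : n < 2 * N) :
    (Xop + ((1 - q) * s) • Dq) (L t n) = X ^ (n + 1) + ∑ k ∈ range N,
      C (lucasCoeff n (k + 1) * t ^ (k + 1) +
          (1 - q) * s * (lucasCoeff n k * t ^ k * qInt (n - 2 * k))) * X ^ (n - 1 - 2 * k) := by
  have hX : Xop (L t n) = X ^ (n + 1) + ∑ k ∈ range N,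
      C (lucasCoeff n (k + 1) * t ^ (k + 1)) * X ^ (n - 1 - 2 * k) := by
    rw [Xop_apply, L_eq_X_pow_add_sum_range t hn (N := N) (by omega), mul_add, ← pow_succ',
      mul_sum]
    congr 1
    refine sum_congr rfl fun k _ => ?_
    rw [X_mul_C_lucasCoeff_mul_X_pow, show n + 1 - 2 * (k + 1) = n - 1 - 2 * k by omega]
  have hD : Dq (L t n) = ∑ k ∈ range N,
      C (lucasCoeff n k * t ^ k * qInt (n - 2 * k)) * X ^ (n - 1 - 2 * k) := by
    rw [L_eq_sum_range t hn hN, map_sum]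
    refine sum_congr rfl fun k _ => ?_
    rw [Dq_C_mul_X_pow, show n - 2 * k - 1 = n - 1 - 2 * k by omega]
  rw [LinearMap.add_apply, LinearMap.smul_apply, hX, hD, smul_sum, add_assoc, ← sum_add_distrib]
  simp only [smul_C_mul_X_pow, ← add_mul, ← C_add]

lemma L_succ_add_C_mul_L_pred (t c : F) {n N : ℕ} (hn : 2 ≤ n) (hN : n < 2 * N) :
    L t (n + 1) + C c * L t (n - 1) = X ^ (n + 1) + ∑ k ∈ range N,
      C (lucasCoeff (n + 1) (k + 1) * t ^ (k + 1) + c * (lucasCoeff (n - 1) k * t ^ k))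
        * X ^ (n - 1 - 2 * k) := by
  rw [L_eq_X_pow_add_sum_range t n.succ_ne_zero (N := N) (by omega),
    L_eq_sum_range t (by omega : n - 1 ≠ 0) (N := N) (by omega), mul_sum, add_assoc,
    ← sum_add_distrib]
  congr 1
  refine sum_congr rfl fun k _ => ?_
  rw [show n + 1 - 2 * (k + 1) = n - 1 - 2 * k by omega, ← mul_assoc, ← C_mul, ← add_mul,
    ← C_add]

theorem lucas_recurrence (n : ℕ) (hn : 2 ≤ n) :
    (Xop + ((1 - q) * s) • Dq) (L (-s) n) = L (-s) (n + 1) + Polynomial.C s * L (-s) (n - 1) := by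
  rw [Xop_add_smul_Dq_apply_L (-s) (N := n) (by omega) (by omega),
    L_succ_add_C_mul_L_pred (-s) s hn (N := n) (by omega)]
  congr 1
  refine sum_congr rfl fun k _ => ?_
  rw [lucasCoeff_recurrence hn k]
  congr 2
  ring

end
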